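/- arXiv:2211.02974 — 2 statements merged into one kernel-verified Lean document; each statement's English description precedes it below -/
import Mathlib

section
/- Let (B,S) be an S5-subordination algebra, NI(B) its set of normal round ideals, and define Q : B → NI(B) by a Q I iff a ∈ I. Then Q is a compatible subordination from (B,S) to the de Vries algebra (NI(B), ≺), i.e., Q is a subordination with ≺ ∘ Q = Q = Q ∘ S. -/
open Set

/-- Image of a set under a relation: `S[X] = {b | ∃ x ∈ X, x S b}`. -/
def relImg {B₁ B₂ : Type*} (S : B₁ → B₂ → Prop) (X : Set B₁) : Set B₂ :=
  {b | ∃ x ∈ X, S x b}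

/-- Preimage of a set under a relation: `S⁻¹[X] = {a | ∃ x ∈ X, a S x}`. -/
def relPre {B₁ B₂ : Type*} (S : B₁ → B₂ → Prop) (X : Set B₂) : Set B₁ :=
  {a | ∃ x ∈ X, S a x}

/-- Relation composition: `a (T₂ ∘ T₁) c` iff `∃ b, a T₁ b ∧ b T₂ c`. -/
def relComp {B₁ B₂ B₃ : Type*} (T₂ : B₂ → B₃ → Prop) (T₁ : B₁ → B₂ → Prop) :
    B₁ → B₃ → Prop :=
  fun a c => ∃ b, T₁ a b ∧ T₂ b c

/-- Pointwise complement of a set: `¬X = {¬x | x ∈ X}`. -/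
def complSet {B : Type*} [BooleanAlgebra B] (X : Set B) : Set B := (·ᶜ) '' X

/-- A subordination between boolean algebras (axioms S1–S4). -/
structure IsSubord {B₁ B₂ : Type*} [BooleanAlgebra B₁] [BooleanAlgebra B₂]
    (T : B₁ → B₂ → Prop) : Prop where
  rel_bot : T ⊥ ⊥
  rel_top : T ⊤ ⊤
  sup_left : ∀ a b c, T a c → T b c → T (a ⊔ b) c
  inf_right : ∀ a c d, T a c → T a d → T a (c ⊓ d)
  mono : ∀ a b c d, a ≤ b → T b c → c ≤ d → T a d

/-- An S5-subordination on a boolean algebra (axioms S1–S7). -/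
structure IsS5Sub {B : Type*} [BooleanAlgebra B] (S : B → B → Prop)
    extends IsSubord S : Prop where
  le_of_rel : ∀ a b, S a b → a ≤ b
  compl_rel : ∀ a b, S a b → S bᶜ aᶜ
  dense : ∀ a b, S a b → ∃ c, S a c ∧ S c b

/-- A compatible subordination between S5-subordination algebras. -/
def IsCompat {B₁ B₂ : Type*} [BooleanAlgebra B₁] [BooleanAlgebra B₂]
    (S₁ : B₁ → B₁ → Prop) (S₂ : B₂ → B₂ → Prop) (T : B₁ → B₂ → Prop) : Prop :=
  IsSubord T ∧ relComp S₂ T = T ∧ relComp T S₁ = T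

/-- Ideal of a boolean algebra (as a set). -/
def IsIdeal {B : Type*} [BooleanAlgebra B] (I : Set B) : Prop :=
  ⊥ ∈ I ∧ (∀ a b : B, a ≤ b → b ∈ I → a ∈ I) ∧ (∀ a b : B, a ∈ I → b ∈ I → a ⊔ b ∈ I)

/-- Round ideal: an ideal with `I = S⁻¹[I]`. -/
def IsRoundIdeal {B : Type*} [BooleanAlgebra B] (S : B → B → Prop) (I : Set B) : Prop :=
  IsIdeal I ∧ relPre S I = I

/-- The ideal generated by a set: intersection of all ideals containing it. -/
def idealGen {B : Type*} [BooleanAlgebra B] (X : Set B) : Set B :=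
  ⋂₀ {J | IsIdeal J ∧ X ⊆ J}

/-- The pseudocomplement of a round ideal: `I* = ¬S[U(I)]`. -/
def pstar {B : Type*} [BooleanAlgebra B] (S : B → B → Prop) (I : Set B) : Set B :=
  complSet (relImg S (upperBounds I))

/-- The well-inside relation on round ideals: `I ≺ J` iff `U(I) ∩ J ≠ ∅`. -/
def precR {B : Type*} [BooleanAlgebra B] (I J : Set B) : Prop :=
  (upperBounds I ∩ J).Nonempty

/-- Normal round ideal: a round ideal with `I = I**`. -/
def IsNormalRoundIdeal {B : Type*} [BooleanAlgebra B] (S : B → B → Prop) (I : Set B) : Prop :=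
  IsRoundIdeal S I ∧ pstar S (pstar S I) = I

/-- The dual of a subordination: `b T̃ a` iff `¬a T ¬b`. -/
def relDual {B₁ B₂ : Type*} [BooleanAlgebra B₁] [BooleanAlgebra B₂]
    (T : B₁ → B₂ → Prop) : B₂ → B₁ → Prop :=
  fun b a => T aᶜ bᶜ

/-- Continuity of a compatible subordination. -/
def IsContinuousSub {B₁ B₂ : Type*} [BooleanAlgebra B₁] [BooleanAlgebra B₂]
    (S₁ : B₁ → B₁ → Prop) (S₂ : B₂ → B₂ → Prop) (T : B₁ → B₂ → Prop) : Prop :=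
  ∀ b₁ b₂, S₂ b₁ b₂ → ∃ a, relDual T b₁ a ∧ ∀ a', relDual T b₂ a' → S₁ a a'

/-- Functional subordination: `T̃ ∘ T ⊆ S₁` and `S₂ ⊆ T ∘ T̃`. -/
def IsFunctionalSub {B₁ B₂ : Type*} [BooleanAlgebra B₁] [BooleanAlgebra B₂]
    (S₁ : B₁ → B₁ → Prop) (S₂ : B₂ → B₂ → Prop) (T : B₁ → B₂ → Prop) : Prop :=
  (∀ a a', relComp (relDual T) T a a' → S₁ a a') ∧
  (∀ b b', S₂ b b' → relComp T (relDual T) b b')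

/-!
Normal round ideals are in particular round ideals, which already gives the subordination
axioms and `Q ∘ S = Q`; the only extra facts needed are that `{⊥}`, `B` and `I ∩ J` are again
normal, the last because `I ↦ I**` is monotone and inflationary on round ideals.
For `≺ ∘ Q = Q`, given `a ∈ I` pick `a S d S c` with `c ∈ I`: the normal ideal
`J = {x | S x dᶜ}*` contains `a` (witnessed by `dᶜ`) and is bounded above by `c`, since `cᶜ S dᶜ`.
-/

section SubordinationAlgebra

variable {B : Type*} [BooleanAlgebra B] {S : B → B → Prop} {I J X Y : Set B} {a b : B}

lemma IsSubord.bot_left {B₂ : Type*} [BooleanAlgebra B₂] {T : B → B₂ → Prop}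
    (hT : IsSubord T) (b : B₂) : T ⊥ b :=
  hT.mono ⊥ ⊥ ⊥ b le_rfl hT.rel_bot bot_le

lemma IsSubord.top_right {B₂ : Type*} [BooleanAlgebra B₂] {T : B → B₂ → Prop}
    (hT : IsSubord T) (a : B) : T a ⊤ :=
  hT.mono a ⊤ ⊤ ⊤ le_top hT.rel_top le_rfl

lemma IsIdeal.mem_of_le (hI : IsIdeal I) (hab : a ≤ b) (hb : b ∈ I) : a ∈ I :=
  hI.2.1 a b hab hb

lemma IsIdeal.sup_mem (hI : IsIdeal I) (ha : a ∈ I) (hb : b ∈ I) : a ⊔ b ∈ I :=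
  hI.2.2 a b ha hb

lemma IsIdeal.inter (hI : IsIdeal I) (hJ : IsIdeal J) : IsIdeal (I ∩ J) :=
  ⟨⟨hI.1, hJ.1⟩, fun _ _ hab hb => ⟨hI.mem_of_le hab hb.1, hJ.mem_of_le hab hb.2⟩,
    fun _ _ ha hb => ⟨hI.sup_mem ha.1 hb.1, hJ.sup_mem ha.2 hb.2⟩⟩

lemma IsRoundIdeal.mem_iff_exists_rel (hI : IsRoundIdeal S I) :
    a ∈ I ↔ ∃ b, S a b ∧ b ∈ I := by
  conv_lhs => rw [← hI.2]
  simp only [relPre, mem_ofPred_eq, and_comm]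

lemma isRoundIdeal_of_exists_rel (hS : IsS5Sub S) (hI : IsIdeal I)
    (h : ∀ a ∈ I, ∃ b, S a b ∧ b ∈ I) : IsRoundIdeal S I := by
  refine ⟨hI, Subset.antisymm ?_ fun a ha => ?_⟩
  · rintro a ⟨b, hb, hab⟩
    exact hI.mem_of_le (hS.le_of_rel a b hab) hb
  · obtain ⟨b, hab, hb⟩ := h a ha
    exact ⟨b, hb, hab⟩

lemma IsRoundIdeal.inter (hS : IsS5Sub S) (hI : IsRoundIdeal S I) (hJ : IsRoundIdeal S J) :
    IsRoundIdeal S (I ∩ J) := by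
  refine isRoundIdeal_of_exists_rel hS (hI.1.inter hJ.1) fun a ⟨haI, haJ⟩ => ?_
  obtain ⟨b, hab, hb⟩ := hI.mem_iff_exists_rel.1 haI
  obtain ⟨c, hac, hc⟩ := hJ.mem_iff_exists_rel.1 haJ
  exact ⟨b ⊓ c, hS.inf_right a b c hab hac,
    hI.1.mem_of_le inf_le_left hb, hJ.1.mem_of_le inf_le_right hc⟩

lemma isRoundIdeal_setOf_rel (hS : IsS5Sub S) (c : B) : IsRoundIdeal S {x | S x c} := by
  refine isRoundIdeal_of_exists_rel hS ⟨hS.bot_left c, fun a b hab hb => ?_,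
    fun a b ha hb => hS.sup_left a b c ha hb⟩ fun a ha => ?_
  · exact hS.mono a b c c hab hb le_rfl
  · obtain ⟨d, had, hdc⟩ := hS.dense a c ha
    exact ⟨d, had, hdc⟩

lemma isRoundIdeal_singleton_bot (hS : IsS5Sub S) : IsRoundIdeal S ({⊥} : Set B) := by
  refine isRoundIdeal_of_exists_rel hS ⟨rfl, fun a b hab hb => ?_, fun a b ha hb => ?_⟩
    fun a ha => ⟨⊥, ha ▸ hS.rel_bot, rfl⟩
  · rw [mem_singleton_iff] at hb ⊢
    exact le_bot_iff.1 (hb ▸ hab)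
  · rw [mem_singleton_iff] at ha hb ⊢
    rw [ha, hb, bot_sup_eq]

lemma isRoundIdeal_univ (hS : IsS5Sub S) : IsRoundIdeal S (univ : Set B) :=
  isRoundIdeal_of_exists_rel hS ⟨trivial, fun _ _ _ _ => trivial, fun _ _ _ _ => trivial⟩
    fun a _ => ⟨⊤, hS.top_right a, trivial⟩

lemma mem_pstar_iff {x : B} : x ∈ pstar S X ↔ ∃ u ∈ upperBounds X, S u xᶜ := by
  simp only [pstar, complSet, relImg, mem_image, mem_ofPred_eq]
  constructor
  · rintro ⟨y, ⟨u, hu, huy⟩, rfl⟩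
    exact ⟨u, hu, by rwa [compl_compl]⟩
  · rintro ⟨u, hu, h⟩
    exact ⟨xᶜ, ⟨u, hu, h⟩, compl_compl x⟩

lemma pstar_anti (hXY : X ⊆ Y) : pstar S Y ⊆ pstar S X := fun _ hx => by
  obtain ⟨u, hu, h⟩ := mem_pstar_iff.1 hx
  exact mem_pstar_iff.2 ⟨u, fun _ hz => hu (hXY hz), h⟩

lemma isRoundIdeal_pstar (hS : IsS5Sub S) (X : Set B) : IsRoundIdeal S (pstar S X) := by
  refine isRoundIdeal_of_exists_rel hS ⟨?_, fun a b hab hb => ?_, fun a b ha hb => ?_⟩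
    fun a ha => ?_
  · exact mem_pstar_iff.2 ⟨⊤, fun _ _ => le_top, by simpa using hS.rel_top⟩
  · obtain ⟨u, hu, h⟩ := mem_pstar_iff.1 hb
    exact mem_pstar_iff.2 ⟨u, hu, hS.mono u u bᶜ aᶜ le_rfl h (compl_le_compl hab)⟩
  · obtain ⟨u, hu, hua⟩ := mem_pstar_iff.1 ha
    obtain ⟨v, hv, hvb⟩ := mem_pstar_iff.1 hb
    refine mem_pstar_iff.2 ⟨u ⊓ v, fun _ hz => le_inf (hu hz) (hv hz), ?_⟩
    rw [compl_sup]
    exact hS.inf_right _ _ _ (hS.mono _ u _ _ inf_le_left hua le_rfl)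
      (hS.mono _ v _ _ inf_le_right hvb le_rfl)
  · obtain ⟨u, hu, h⟩ := mem_pstar_iff.1 ha
    obtain ⟨d, hud, hda⟩ := hS.dense u aᶜ h
    refine ⟨dᶜ, by simpa using hS.compl_rel d aᶜ hda, mem_pstar_iff.2 ⟨u, hu, ?_⟩⟩
    rwa [compl_compl]

lemma IsRoundIdeal.subset_pstar_pstar (hS : IsS5Sub S) (hI : IsRoundIdeal S I) :
    I ⊆ pstar S (pstar S I) := fun a ha => by
  obtain ⟨c, hac, hc⟩ := hI.mem_iff_exists_rel.1 ha
  refine mem_pstar_iff.2 ⟨cᶜ, fun d hd => ?_, hS.compl_rel a c hac⟩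
  obtain ⟨v, hv, hvd⟩ := mem_pstar_iff.1 hd
  exact le_compl_comm.1 ((hv hc).trans (hS.le_of_rel _ _ hvd))

lemma isNormalRoundIdeal_pstar (hS : IsS5Sub S) (hI : IsRoundIdeal S I) :
    IsNormalRoundIdeal S (pstar S I) :=
  ⟨isRoundIdeal_pstar hS I, Subset.antisymm (pstar_anti (hI.subset_pstar_pstar hS))
    ((isRoundIdeal_pstar hS I).subset_pstar_pstar hS)⟩

lemma pstar_univ (hS : IsS5Sub S) : pstar S (univ : Set B) = {⊥} := by
  ext x
  rw [mem_pstar_iff, mem_singleton_iff]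
  constructor
  · rintro ⟨u, hu, h⟩
    have hu_top : u = ⊤ := top_le_iff.1 (hu (mem_univ ⊤))
    rw [hu_top] at h
    exact compl_eq_top.1 (top_le_iff.1 (hS.le_of_rel _ _ h))
  · rintro rfl
    exact ⟨⊤, fun _ _ => le_top, by simpa using hS.rel_top⟩

lemma pstar_singleton_bot (hS : IsS5Sub S) : pstar S ({⊥} : Set B) = univ :=
  eq_univ_of_forall fun x =>
    mem_pstar_iff.2 ⟨⊥, fun _ hz => (mem_singleton_iff.1 hz).le, hS.bot_left xᶜ⟩

lemma isNormalRoundIdeal_singleton_bot (hS : IsS5Sub S) :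
    IsNormalRoundIdeal S ({⊥} : Set B) :=
  ⟨isRoundIdeal_singleton_bot hS, by rw [pstar_singleton_bot hS, pstar_univ hS]⟩

lemma isNormalRoundIdeal_univ (hS : IsS5Sub S) : IsNormalRoundIdeal S (univ : Set B) :=
  ⟨isRoundIdeal_univ hS, by rw [pstar_univ hS, pstar_singleton_bot hS]⟩

lemma IsNormalRoundIdeal.inter (hS : IsS5Sub S) (hI : IsNormalRoundIdeal S I)
    (hJ : IsNormalRoundIdeal S J) : IsNormalRoundIdeal S (I ∩ J) := by
  have hIJ := hI.1.inter hS hJ.1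
  refine ⟨hIJ, Subset.antisymm (subset_inter ?_ ?_) (hIJ.subset_pstar_pstar hS)⟩
  · exact (pstar_anti (pstar_anti inter_subset_left)).trans hI.2.le
  · exact (pstar_anti (pstar_anti inter_subset_right)).trans hJ.2.le

lemma IsRoundIdeal.exists_precR (hS : IsS5Sub S) (hI : IsRoundIdeal S I) (ha : a ∈ I) :
    ∃ J, IsNormalRoundIdeal S J ∧ a ∈ J ∧ precR J I := by
  obtain ⟨c, hac, hc⟩ := hI.mem_iff_exists_rel.1 ha
  obtain ⟨d, had, hdc⟩ := hS.dense a c hac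
  refine ⟨pstar S {x | S x dᶜ}, isNormalRoundIdeal_pstar hS (isRoundIdeal_setOf_rel hS dᶜ),
    mem_pstar_iff.2 ⟨dᶜ, fun _ => hS.le_of_rel _ _, hS.compl_rel a d had⟩, c, ?_, hc⟩
  intro x hx
  obtain ⟨u, hu, hux⟩ := mem_pstar_iff.1 hx
  have hcu : cᶜ ≤ u := hu (hS.compl_rel d c hdc)
  exact compl_le_compl_iff_le.1 (hcu.trans (hS.le_of_rel u xᶜ hux))

lemma IsIdeal.mem_of_precR (hI : IsIdeal I) (hJI : precR J I) (ha : a ∈ J) : a ∈ I := by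
  obtain ⟨u, hu, huI⟩ := hJI
  exact hI.mem_of_le (hu ha) huI

end SubordinationAlgebra

/-- the relation `Q : B → NI(B)` given by `a Q I` iff `a ∈ I` is a
compatible subordination from `(B,S)` to `(NI(B), ≺)`. -/
theorem stmt10 {B : Type*} [BooleanAlgebra B] (S : B → B → Prop) (hS : IsS5Sub S) :
    -- S1: `⊥ Q ⊥` and `⊤ Q ⊤` (bottom and top of NI(B) are `{⊥}` and `univ`)
    (IsNormalRoundIdeal S ({⊥} : Set B) ∧ (⊥ : B) ∈ ({⊥} : Set B)) ∧
    (IsNormalRoundIdeal S (Set.univ : Set B) ∧ (⊤ : B) ∈ (Set.univ : Set B)) ∧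
    -- S2
    (∀ (a b : B) (I : Set B), IsNormalRoundIdeal S I → a ∈ I → b ∈ I → a ⊔ b ∈ I) ∧
    -- S3 (the meet in NI(B) is intersection)
    (∀ (a : B) (I J : Set B), IsNormalRoundIdeal S I → IsNormalRoundIdeal S J →
      a ∈ I → a ∈ J → IsNormalRoundIdeal S (I ∩ J) ∧ a ∈ I ∩ J) ∧
    -- S4
    (∀ (a b : B) (I J : Set B), IsNormalRoundIdeal S I → IsNormalRoundIdeal S J →
      a ≤ b → b ∈ I → I ⊆ J → a ∈ J) ∧
    -- compatibility: Q ∘ S = Q and ≺ ∘ Q = Q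
    (∀ (a : B) (I : Set B), IsNormalRoundIdeal S I →
      ((a ∈ I ↔ ∃ b, S a b ∧ b ∈ I) ∧
       (a ∈ I ↔ ∃ J : Set B, IsNormalRoundIdeal S J ∧ a ∈ J ∧ precR J I))) := by
  refine ⟨⟨isNormalRoundIdeal_singleton_bot hS, rfl⟩, ⟨isNormalRoundIdeal_univ hS, trivial⟩,
    fun a b I hI => hI.1.1.sup_mem,
    fun a I J hI hJ haI haJ => ⟨hI.inter hS hJ, haI, haJ⟩,
    fun a b I J _ hJ hab hb hIJ => hJ.1.1.mem_of_le hab (hIJ hb),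
    fun a I hI => ⟨hI.1.mem_iff_exists_rel, ⟨hI.1.exists_precR hS, ?_⟩⟩⟩
  rintro ⟨J, -, haJ, hJI⟩
  exact hI.1.1.mem_of_precR hJI haJ
end

section
/- Let T : (B₁,S₁) → (B₂,S₂) be a functional compatible subordination between S5-subordination algebras. Then the preframe homomorphism RI(T) : RI(B₂) → RI(B₁), I ↦ T⁻¹[I], preserves the bottom element and binary joins of round ideals, hence is a frame homomorphism. -/
open Set

/-!
Functionality gives `T̃ ∘ T ⊆ S₁`, and `S₁` lies below `≤`. Hence `a T ⊥` forces `a ≤ ¬a`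
(since also `a T ⊤`), i.e. `a = ⊥`. For joins, an element of `T⁻¹[I ∨ J]` satisfies `a T (i ⊔ j)`
with `i ∈ I`, `j ∈ J`; roundness gives `i S₂ i'`, `j S₂ j'` inside `I`, `J`, and `S₂ ⊆ T ∘ T̃`
turns these into `a₁ T i'`, `a₂ T j'` with `¬a₁ T ¬i`, `¬a₂ T ¬j`. Then `¬(a₁ ⊔ a₂) T ¬(i ⊔ j)`,
so `a S₁ (a₁ ⊔ a₂)` and `a ≤ a₁ ⊔ a₂ ∈ T⁻¹[I] ∨ T⁻¹[J]`.
-/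

lemma relPre_mono {B₁ B₂ : Type*} (T : B₁ → B₂ → Prop) {X Y : Set B₂} (h : X ⊆ Y) :
    relPre T X ⊆ relPre T Y :=
  fun _ ⟨x, hx, hax⟩ => ⟨x, h hx, hax⟩

section Ideals

variable {B : Type*} [BooleanAlgebra B]

lemma isIdeal_idealGen (X : Set B) : IsIdeal (idealGen X) :=
  ⟨fun _ hJ => hJ.1.1,
   fun a b hab hb J hJ => hJ.1.2.1 a b hab (hb J hJ),
   fun a b ha hb J hJ => hJ.1.2.2 a b (ha J hJ) (hb J hJ)⟩

lemma subset_idealGen (X : Set B) : X ⊆ idealGen X :=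
  fun _ hx _ hJ => hJ.2 hx

lemma idealGen_subset {X J : Set B} (hJ : IsIdeal J) (h : X ⊆ J) : idealGen X ⊆ J :=
  fun _ hx => hx J ⟨hJ, h⟩

lemma IsIdeal.exists_le_sup_of_mem_idealGen_union {I J : Set B} (hI : IsIdeal I)
    (hJ : IsIdeal J) {c : B} (hc : c ∈ idealGen (I ∪ J)) :
    ∃ i ∈ I, ∃ j ∈ J, c ≤ i ⊔ j := by
  have hK : IsIdeal {c : B | ∃ i ∈ I, ∃ j ∈ J, c ≤ i ⊔ j} := by
    refine ⟨⟨⊥, hI.1, ⊥, hJ.1, bot_le⟩, ?_, ?_⟩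
    · rintro a b hab ⟨i, hi, j, hj, hb⟩
      exact ⟨i, hi, j, hj, hab.trans hb⟩
    · rintro a b ⟨i, hi, j, hj, ha⟩ ⟨i', hi', j', hj', hb⟩
      refine ⟨i ⊔ i', hI.2.2 i i' hi hi', j ⊔ j', hJ.2.2 j j' hj hj', ?_⟩
      calc a ⊔ b ≤ (i ⊔ j) ⊔ (i' ⊔ j') := sup_le_sup ha hb
        _ = (i ⊔ i') ⊔ (j ⊔ j') := sup_sup_sup_comm i j i' j'
  refine hc _ ⟨hK, ?_⟩
  rintro x (hx | hx)
  · exact ⟨x, hx, ⊥, hJ.1, le_sup_left⟩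
  · exact ⟨⊥, hI.1, x, hx, le_sup_right⟩

end Ideals

section Subordinations

variable {B₁ B₂ : Type*} [BooleanAlgebra B₁] [BooleanAlgebra B₂]

lemma IsSubord.rel_top_right {T : B₁ → B₂ → Prop} (hT : IsSubord T) (a : B₁) : T a ⊤ :=
  hT.mono a ⊤ ⊤ ⊤ le_top hT.rel_top le_rfl

lemma IsSubord.inf_inf {T : B₁ → B₂ → Prop} (hT : IsSubord T) {a b : B₁} {c d : B₂}
    (hac : T a c) (hbd : T b d) : T (a ⊓ b) (c ⊓ d) :=
  hT.inf_right _ _ _ (hT.mono _ a c c inf_le_left hac le_rfl)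
    (hT.mono _ b d d inf_le_right hbd le_rfl)

lemma IsIdeal.relPre {T : B₁ → B₂ → Prop} (hT : IsSubord T) {K : Set B₂} (hK : IsIdeal K) :
    IsIdeal (relPre T K) := by
  refine ⟨⟨⊥, hK.1, hT.rel_bot⟩, ?_, ?_⟩
  · rintro a b hab ⟨k, hk, hbk⟩
    exact ⟨k, hk, hT.mono a b k k hab hbk le_rfl⟩
  · rintro a b ⟨k, hk, hak⟩ ⟨k', hk', hbk'⟩
    refine ⟨k ⊔ k', hK.2.2 k k' hk hk', hT.sup_left a b (k ⊔ k') ?_ ?_⟩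
    · exact hT.mono a a k (k ⊔ k') le_rfl hak le_sup_left
    · exact hT.mono b b k' (k ⊔ k') le_rfl hbk' le_sup_right

variable {S₁ : B₁ → B₁ → Prop} {S₂ : B₂ → B₂ → Prop} {T : B₁ → B₂ → Prop}

lemma IsFunctionalSub.le_of_rel_of_rel_compl (hS₁ : IsS5Sub S₁) (hf : IsFunctionalSub S₁ S₂ T)
    {a a' : B₁} {b : B₂} (hab : T a b) (hab' : T a'ᶜ bᶜ) : a ≤ a' :=
  hS₁.le_of_rel a a' (hf.1 a a' ⟨b, hab, hab'⟩)

lemma IsFunctionalSub.eq_bot_of_rel_bot (hS₁ : IsS5Sub S₁) (hT : IsSubord T)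
    (hf : IsFunctionalSub S₁ S₂ T) {a : B₁} (ha : T a ⊥) : a = ⊥ := by
  have hle : a ≤ aᶜ := hf.le_of_rel_of_rel_compl hS₁ ha <| by
    simpa only [compl_compl, compl_bot] using hT.rel_top_right a
  exact le_compl_self.mp hle

lemma IsFunctionalSub.exists_le_sup_of_rel_sup (hS₁ : IsS5Sub S₁) (hT : IsSubord T)
    (hf : IsFunctionalSub S₁ S₂ T) {a : B₁} {b₁ b₂ b₁' b₂' : B₂} (ha : T a (b₁ ⊔ b₂))
    (hb₁ : S₂ b₁ b₁') (hb₂ : S₂ b₂ b₂') :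
    ∃ a₁ a₂, a ≤ a₁ ⊔ a₂ ∧ T a₁ b₁' ∧ T a₂ b₂' := by
  obtain ⟨a₁, ha₁, ha₁'⟩ := hf.2 b₁ b₁' hb₁
  obtain ⟨a₂, ha₂, ha₂'⟩ := hf.2 b₂ b₂' hb₂
  have hcompl : T (a₁ ⊔ a₂)ᶜ (b₁ ⊔ b₂)ᶜ := by
    simpa only [compl_sup] using hT.inf_inf ha₁ ha₂
  exact ⟨a₁, a₂, hf.le_of_rel_of_rel_compl hS₁ ha hcompl, ha₁', ha₂'⟩

lemma IsFunctionalSub.relPre_idealGen_union_subset (hS₁ : IsS5Sub S₁) (hT : IsSubord T)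
    (hf : IsFunctionalSub S₁ S₂ T) {I J : Set B₂} (hI : IsRoundIdeal S₂ I)
    (hJ : IsRoundIdeal S₂ J) :
    relPre T (idealGen (I ∪ J)) ⊆ idealGen (relPre T I ∪ relPre T J) := by
  rintro a ⟨c, hc, hac⟩
  obtain ⟨i, hi, j, hj, hcij⟩ := hI.1.exists_le_sup_of_mem_idealGen_union hJ.1 hc
  rw [← hI.2] at hi
  rw [← hJ.2] at hj
  obtain ⟨i', hi', hii'⟩ := hi
  obtain ⟨j', hj', hjj'⟩ := hj
  obtain ⟨a₁, a₂, hle, ha₁, ha₂⟩ :=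
    hf.exists_le_sup_of_rel_sup hS₁ hT (hT.mono a a c _ le_rfl hac hcij) hii' hjj'
  have hG := isIdeal_idealGen (relPre T I ∪ relPre T J)
  exact hG.2.1 a _ hle (hG.2.2 a₁ a₂ (subset_idealGen _ (Or.inl ⟨i', hi', ha₁⟩))
    (subset_idealGen _ (Or.inr ⟨j', hj', ha₂⟩)))

lemma idealGen_relPre_union_subset (hT : IsSubord T) (I J : Set B₂) :
    idealGen (relPre T I ∪ relPre T J) ⊆ relPre T (idealGen (I ∪ J)) :=
  idealGen_subset ((isIdeal_idealGen (I ∪ J)).relPre hT) <| union_subset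
    (relPre_mono T ((subset_union_left).trans (subset_idealGen _)))
    (relPre_mono T ((subset_union_right).trans (subset_idealGen _)))

end Subordinations

theorem stmt18_general {B₁ B₂ : Type*} [BooleanAlgebra B₁] [BooleanAlgebra B₂]
    (S₁ : B₁ → B₁ → Prop) (S₂ : B₂ → B₂ → Prop)
    (hS₁ : IsS5Sub S₁)
    (T : B₁ → B₂ → Prop) (hT : IsCompat S₁ S₂ T)
    (hf : IsFunctionalSub S₁ S₂ T) :
    relPre T ({⊥} : Set B₂) = ({⊥} : Set B₁) ∧
    (∀ I J : Set B₂, IsRoundIdeal S₂ I → IsRoundIdeal S₂ J →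
      relPre T (idealGen (I ∪ J)) = idealGen (relPre T I ∪ relPre T J)) := by
  have hTsub : IsSubord T := hT.1
  refine ⟨?_, fun I J hI hJ => ?_⟩
  · ext a
    constructor
    · rintro ⟨_, rfl, ha⟩
      exact hf.eq_bot_of_rel_bot hS₁ hTsub ha
    · rintro rfl
      exact ⟨⊥, rfl, hTsub.rel_bot⟩
  · exact subset_antisymm (hf.relPre_idealGen_union_subset hS₁ hTsub hI hJ)
      (idealGen_relPre_union_subset hTsub I J)

/-- for a functional compatible subordination `T`, the preframe
homomorphism `I ↦ T⁻¹[I]` on round ideals preserves the bottom element and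
binary joins, hence is a frame homomorphism. -/
theorem stmt18 {B₁ B₂ : Type*} [BooleanAlgebra B₁] [BooleanAlgebra B₂]
    (S₁ : B₁ → B₁ → Prop) (S₂ : B₂ → B₂ → Prop)
    (hS₁ : IsS5Sub S₁) (hS₂ : IsS5Sub S₂)
    (T : B₁ → B₂ → Prop) (hT : IsCompat S₁ S₂ T)
    (hf : IsFunctionalSub S₁ S₂ T) :
    relPre T ({⊥} : Set B₂) = ({⊥} : Set B₁) ∧
    (∀ I J : Set B₂, IsRoundIdeal S₂ I → IsRoundIdeal S₂ J →
      relPre T (idealGen (I ∪ J)) = idealGen (relPre T I ∪ relPre T J)) :=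
  stmt18_general S₁ S₂ hS₁ T hT hf
end
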